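/- Transitivity of quasi-unitary equivalence with explicit error: if R₁ and R₂ are δ₁₂-quasi-unitarily equivalent and R₂ and R₃ are δ₂₃-quasi-unitarily equivalent, then R₁ and R₃ are Φ(δ₁₂,δ₂₃)-quasi-unitarily equivalent, where Φ(a,b) = 3(a+b) + (a+b)² + 2ab + (a+b)³ + a²b², using the identification operators J₁₃ = J₂₃J₁₂ and J₃₁ = J₂₁J₃₂. -/

import Mathlib

/-!
Compose the identification operators, `J₁₃ = J₂₃ J₁₂` and `J₃₁ = J₂₁ J₃₂`, and expand each defect
of the composite pair as a telescoping sum of defects of the two given pairs, each term sandwiched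
between identification operators of norm at most `1 + δ`. The only delicate defect is
`(1 - J₃₁ J₁₃) R₁`, which contains `1 - J₃₂ J₂₃` unresolved. For small `δ₂₃` its norm is
`1 + O(δ₂₃)`: `1 - J₂₃* J₂₃` has spectrum in `[1 - ‖J₂₃‖², 1]`, and `J₃₂` differs from `J₂₃*` by at
most `δ₂₃`. For large `δ₂₃` the crude bound `1 + ‖J₃₂‖ ‖J₂₃‖` suffices. The defects on the side
of `R₃` are those on the side of `R₁` for the reversed chain, as quasi-unitary equivalence is
symmetric.
-/

/-- `R` and `R'` are `δ`-quasi-unitarily equivalent via the identification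
operators `J : H → H'` and `J' : H' → H`. -/
def IsQuasiUnitaryEquiv
    {H H' : Type*}
    [NormedAddCommGroup H] [InnerProductSpace ℂ H] [CompleteSpace H]
    [NormedAddCommGroup H'] [InnerProductSpace ℂ H'] [CompleteSpace H']
    (δ : ℝ) (R : H →L[ℂ] H) (R' : H' →L[ℂ] H')
    (J : H →L[ℂ] H') (J' : H' →L[ℂ] H) : Prop :=
  ‖J‖ ≤ 1 + δ ∧ ‖J'‖ ≤ 1 + δ ∧
  ‖J' - ContinuousLinearMap.adjoint J‖ ≤ δ ∧
  ‖(1 - J'.comp J).comp R‖ ≤ δ ∧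
  ‖(1 - J.comp J').comp R'‖ ≤ δ ∧
  ‖J.comp R - R'.comp J‖ ≤ δ ∧
  ‖J'.comp R' - R.comp J'‖ ≤ δ

/-- The triangle function `Φ(a,b)`. -/
def Phi (a b : ℝ) : ℝ := 3 * (a + b) + (a + b) ^ 2 + 2 * a * b + (a + b) ^ 3 + a ^ 2 * b ^ 2

open ContinuousLinearMap

lemma CStarAlgebra.norm_one_sub_le_of_nonneg {A : Type*} [CStarAlgebra A] [PartialOrder A]
    [StarOrderedRing A] {a : A} (ha : 0 ≤ a) : ‖1 - a‖ ≤ max 1 (‖a‖ - 1) := by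
  nontriviality A
  have hcfc : cfc (fun x : ℝ ↦ 1 - x) a = 1 - a := by
    rw [cfc_sub (fun _ ↦ (1 : ℝ)) (fun x ↦ x) a, cfc_const_one ℝ a, cfc_id' ℝ a]
  rw [← hcfc]
  refine norm_cfc_le (le_max_of_le_left zero_le_one) fun x hx ↦ ?_
  have hx₀ : 0 ≤ x := spectrum_nonneg_of_nonneg ha hx
  have hx₁ : x ≤ ‖a‖ := (Real.le_norm_self x).trans (spectrum.norm_le_norm_of_mem hx)
  rw [Real.norm_eq_abs, abs_le]
  constructor <;> cases max_cases 1 (‖a‖ - 1) <;> linarith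

lemma ContinuousLinearMap.opNorm_comp_le_of_le {𝕜 E F G : Type*} [NontriviallyNormedField 𝕜]
    [SeminormedAddCommGroup E] [NormedSpace 𝕜 E] [SeminormedAddCommGroup F] [NormedSpace 𝕜 F]
    [SeminormedAddCommGroup G] [NormedSpace 𝕜 G] {g : F →L[𝕜] G} {f : E →L[𝕜] F} {α β : ℝ}
    (hg : ‖g‖ ≤ α) (hf : ‖f‖ ≤ β) : ‖g ∘L f‖ ≤ α * β :=
  (opNorm_comp_le g f).trans (mul_le_mul hg hf (norm_nonneg f) ((norm_nonneg g).trans hg))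

section Hilbert

variable {E F : Type*} [NormedAddCommGroup E] [InnerProductSpace ℂ E] [CompleteSpace E]
  [NormedAddCommGroup F] [InnerProductSpace ℂ F] [CompleteSpace F]

lemma ContinuousLinearMap.norm_one_sub_adjoint_comp_self_le (T : E →L[ℂ] F) :
    ‖1 - adjoint T ∘L T‖ ≤ max 1 (‖T‖ ^ 2 - 1) := by
  have h := CStarAlgebra.norm_one_sub_le_of_nonneg
    ((nonneg_iff_isPositive _).mpr (isPositive_adjoint_comp_self T))
  rwa [norm_adjoint_comp_self, ← sq] at h

lemma ContinuousLinearMap.norm_one_sub_comp_le_of_norm_sub_adjoint_le {J : E →L[ℂ] F}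
    {J' : F →L[ℂ] E} {δ : ℝ} (hJ : ‖J‖ ≤ 1 + δ) (hJ' : ‖J' - adjoint J‖ ≤ δ) :
    ‖1 - J' ∘L J‖ ≤ max 1 ((1 + δ) ^ 2 - 1) + δ * (1 + δ) := by
  have hdecomp : 1 - J' ∘L J = (1 - adjoint J ∘L J) - (J' - adjoint J) ∘L J := by
    rw [sub_comp]; abel
  rw [hdecomp]
  refine (norm_sub_le _ _).trans (add_le_add ?_ (opNorm_comp_le_of_le hJ' hJ))
  refine (norm_one_sub_adjoint_comp_self_le J).trans (max_le_max le_rfl ?_)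
  have := pow_le_pow_left₀ (norm_nonneg J) hJ 2
  linarith

end Hilbert

lemma Phi_comm (a b : ℝ) : Phi a b = Phi b a := by
  unfold Phi; ring

lemma add_mul_add_le_Phi {a b s : ℝ} (ha : 0 ≤ a) (hb : 0 ≤ b)
    (hs_small : s ≤ max 1 ((1 + b) ^ 2 - 1) + b * (1 + b)) (hs_large : s ≤ 1 + (1 + b) * (1 + b)) :
    a + (1 + a) * (b * (1 + a)) + (1 + a) * s * a ≤ Phi a b := by
  have hab := mul_nonneg ha hb
  unfold Phi
  rcases le_or_gt ((1 + b) ^ 2) 2 with hb_small | hb_large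
  · have hs : s ≤ 1 + b * (1 + b) := by
      rwa [max_eq_left (by linarith)] at hs_small
    have := mul_le_mul_of_nonneg_right (mul_le_mul_of_nonneg_left hs (by linarith : 0 ≤ 1 + a)) ha
    nlinarith [mul_nonneg hab hab, mul_nonneg hab hb, mul_nonneg hab ha,
      mul_nonneg (mul_nonneg ha ha) ha, mul_nonneg (mul_nonneg hb hb) hb]
  · have := mul_le_mul_of_nonneg_right
      (mul_le_mul_of_nonneg_left hs_large (by linarith : 0 ≤ 1 + a)) ha
    -- `a³ - a² ≥ -4/27` is absorbed by `2b + b² > 1`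
    nlinarith [mul_nonneg (sq_nonneg (3 * a - 2)) (by linarith : (0 : ℝ) ≤ 3 * a + 1),
      mul_nonneg ha (sq_nonneg b), mul_nonneg (mul_nonneg hb hb) hb,
      mul_nonneg hab hab, mul_nonneg hb (sq_nonneg a)]

namespace IsQuasiUnitaryEquiv

variable {H1 H2 H3 : Type*}
  [NormedAddCommGroup H1] [InnerProductSpace ℂ H1] [CompleteSpace H1]
  [NormedAddCommGroup H2] [InnerProductSpace ℂ H2] [CompleteSpace H2]
  [NormedAddCommGroup H3] [InnerProductSpace ℂ H3] [CompleteSpace H3]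
  {R1 : H1 →L[ℂ] H1} {R2 : H2 →L[ℂ] H2} {R3 : H3 →L[ℂ] H3} {a b : ℝ}
  {J12 : H1 →L[ℂ] H2} {J21 : H2 →L[ℂ] H1} {J23 : H2 →L[ℂ] H3} {J32 : H3 →L[ℂ] H2}

lemma nonneg (h : IsQuasiUnitaryEquiv a R1 R2 J12 J21) : 0 ≤ a :=
  (norm_nonneg _).trans h.2.2.1

lemma symm (h : IsQuasiUnitaryEquiv a R1 R2 J12 J21) : IsQuasiUnitaryEquiv a R2 R1 J21 J12 := by
  obtain ⟨hJ, hJ', hadj, hR1, hR2, hJR, hJ'R⟩ := h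
  refine ⟨hJ', hJ, ?_, hR2, hR1, hJ'R, hJR⟩
  rwa [← adjoint.norm_map, map_sub, adjoint_adjoint, norm_sub_rev]

lemma norm_comp_le (h12 : IsQuasiUnitaryEquiv a R1 R2 J12 J21)
    (h23 : IsQuasiUnitaryEquiv b R2 R3 J23 J32) : ‖J23 ∘L J12‖ ≤ 1 + Phi a b := by
  have ha := h12.nonneg
  have hb := h23.nonneg
  refine (opNorm_comp_le_of_le h23.1 h12.1).trans ?_
  unfold Phi
  nlinarith [mul_nonneg ha hb]

lemma norm_comp_sub_adjoint_comp_le (h12 : IsQuasiUnitaryEquiv a R1 R2 J12 J21)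
    (h23 : IsQuasiUnitaryEquiv b R2 R3 J23 J32) :
    ‖J21 ∘L J32 - adjoint (J23 ∘L J12)‖ ≤ Phi a b := by
  have ha := h12.nonneg
  have hb := h23.nonneg
  obtain ⟨hJ12, -, hadj12, -⟩ := h12
  obtain ⟨-, hJ32, hadj23, -⟩ := h23
  have hdecomp : J21 ∘L J32 - adjoint (J23 ∘L J12)
      = (J21 - adjoint J12) ∘L J32 + adjoint J12 ∘L (J32 - adjoint J23) := by
    rw [adjoint_comp, sub_comp, comp_sub]; abel
  rw [← adjoint.norm_map] at hJ12
  rw [hdecomp]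
  refine (norm_add_le _ _).trans ((add_le_add (opNorm_comp_le_of_le hadj12 hJ32)
    (opNorm_comp_le_of_le hJ12 hadj23)).trans ?_)
  unfold Phi
  nlinarith [mul_nonneg ha hb]

lemma norm_one_sub_comp_comp_le (h12 : IsQuasiUnitaryEquiv a R1 R2 J12 J21)
    (h23 : IsQuasiUnitaryEquiv b R2 R3 J23 J32) :
    ‖(1 - (J21 ∘L J32) ∘L (J23 ∘L J12)) ∘L R1‖ ≤ Phi a b := by
  have ha := h12.nonneg
  have hb := h23.nonneg
  obtain ⟨hJ12, hJ21, -, hR1, -, hcomm12, -⟩ := h12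
  obtain ⟨hJ23, hJ32, hadj23, hR2, -⟩ := h23
  have hdecomp : (1 - (J21 ∘L J32) ∘L (J23 ∘L J12)) ∘L R1
      = (1 - J21 ∘L J12) ∘L R1 + J21 ∘L ((1 - J32 ∘L J23) ∘L R2) ∘L J12
        + (J21 ∘L (1 - J32 ∘L J23)) ∘L (J12 ∘L R1 - R2 ∘L J12) := by
    simp only [sub_comp, comp_sub, one_def, id_comp, comp_id, comp_assoc]
    abel
  have hS_small := norm_one_sub_comp_le_of_norm_sub_adjoint_le hJ23 hadj23
  have hS_large : ‖1 - J32 ∘L J23‖ ≤ 1 + (1 + b) * (1 + b) :=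
    (norm_sub_le _ _).trans (add_le_add norm_id_le (opNorm_comp_le_of_le hJ32 hJ23))
  rw [hdecomp]
  refine norm_add₃_le.trans ((add_le_add_three hR1
    (opNorm_comp_le_of_le hJ21 (opNorm_comp_le_of_le hR2 hJ12))
    (opNorm_comp_le_of_le (opNorm_comp_le_of_le hJ21 le_rfl) hcomm12)).trans ?_)
  exact add_mul_add_le_Phi ha hb hS_small hS_large

lemma norm_comp_comp_sub_comp_comp_le (h12 : IsQuasiUnitaryEquiv a R1 R2 J12 J21)
    (h23 : IsQuasiUnitaryEquiv b R2 R3 J23 J32) :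
    ‖(J23 ∘L J12) ∘L R1 - R3 ∘L (J23 ∘L J12)‖ ≤ Phi a b := by
  have ha := h12.nonneg
  have hb := h23.nonneg
  obtain ⟨hJ12, -, -, -, -, hcomm12, -⟩ := h12
  obtain ⟨hJ23, -, -, -, -, hcomm23, -⟩ := h23
  have hdecomp : (J23 ∘L J12) ∘L R1 - R3 ∘L (J23 ∘L J12)
      = J23 ∘L (J12 ∘L R1 - R2 ∘L J12) + (J23 ∘L R2 - R3 ∘L J23) ∘L J12 := by
    rw [comp_sub, sub_comp]; simp only [comp_assoc]; abel
  rw [hdecomp]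
  refine (norm_add_le _ _).trans ((add_le_add (opNorm_comp_le_of_le hJ23 hcomm12)
    (opNorm_comp_le_of_le hcomm23 hJ12)).trans ?_)
  unfold Phi
  nlinarith [mul_nonneg ha hb]

end IsQuasiUnitaryEquiv

theorem quasi_unitary_transitive_general
    {H1 H2 H3 : Type*}
    [NormedAddCommGroup H1] [InnerProductSpace ℂ H1] [CompleteSpace H1]
    [NormedAddCommGroup H2] [InnerProductSpace ℂ H2] [CompleteSpace H2]
    [NormedAddCommGroup H3] [InnerProductSpace ℂ H3] [CompleteSpace H3]
    (R1 : H1 →L[ℂ] H1) (R2 : H2 →L[ℂ] H2) (R3 : H3 →L[ℂ] H3)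
    (δ12 δ23 : ℝ)
    (J12 : H1 →L[ℂ] H2) (J21 : H2 →L[ℂ] H1)
    (J23 : H2 →L[ℂ] H3) (J32 : H3 →L[ℂ] H2)
    (h12 : IsQuasiUnitaryEquiv δ12 R1 R2 J12 J21)
    (h23 : IsQuasiUnitaryEquiv δ23 R2 R3 J23 J32) :
    IsQuasiUnitaryEquiv (Phi δ12 δ23) R1 R3 (J23.comp J12) (J21.comp J32) := by
  have h32 := h23.symm
  have h21 := h12.symm
  have hΦ : Phi δ23 δ12 = Phi δ12 δ23 := Phi_comm δ23 δ12
  exact ⟨h12.norm_comp_le h23, hΦ ▸ h32.norm_comp_le h21,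
    h12.norm_comp_sub_adjoint_comp_le h23,
    h12.norm_one_sub_comp_comp_le h23, hΦ ▸ h32.norm_one_sub_comp_comp_le h21,
    h12.norm_comp_comp_sub_comp_comp_le h23, hΦ ▸ h32.norm_comp_comp_sub_comp_comp_le h21⟩

theorem quasi_unitary_transitive
    {H1 H2 H3 : Type*}
    [NormedAddCommGroup H1] [InnerProductSpace ℂ H1] [CompleteSpace H1]
    [NormedAddCommGroup H2] [InnerProductSpace ℂ H2] [CompleteSpace H2]
    [NormedAddCommGroup H3] [InnerProductSpace ℂ H3] [CompleteSpace H3]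
    (R1 : H1 →L[ℂ] H1) (R2 : H2 →L[ℂ] H2) (R3 : H3 →L[ℂ] H3)
    (hsa1 : IsSelfAdjoint R1) (hsa2 : IsSelfAdjoint R2) (hsa3 : IsSelfAdjoint R3)
    (hs1 : spectrum ℝ R1 ⊆ Set.Icc (0:ℝ) 1) (hs2 : spectrum ℝ R2 ⊆ Set.Icc (0:ℝ) 1)
    (hs3 : spectrum ℝ R3 ⊆ Set.Icc (0:ℝ) 1)
    (δ12 δ23 : ℝ) (hδ12 : 0 ≤ δ12) (hδ23 : 0 ≤ δ23)
    (J12 : H1 →L[ℂ] H2) (J21 : H2 →L[ℂ] H1)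
    (J23 : H2 →L[ℂ] H3) (J32 : H3 →L[ℂ] H2)
    (h12 : IsQuasiUnitaryEquiv δ12 R1 R2 J12 J21)
    (h23 : IsQuasiUnitaryEquiv δ23 R2 R3 J23 J32) :
    IsQuasiUnitaryEquiv (Phi δ12 δ23) R1 R3 (J23.comp J12) (J21.comp J32) :=
  quasi_unitary_transitive_general R1 R2 R3 δ12 δ23 J12 J21 J23 J32 h12 h23
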